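/- Let k be a field of characteristic different from 2, and let G = FreeAlgebra k (Fin 4) be the free (noncommutative, associative, unital) k-algebra on four generators x₁, x₂, y₁, y₂. Then the quotient of G by the two-sided ideal generated by {x₁y₁, x₂y₂} is isomorphic, as a k-algebra, to the quotient of G by the two-sided ideal generated by {x₁y₁ + x₂y₂, x₂y₁ + x₁y₂}; an isomorphism is induced by the algebra automorphism of G sending x₁ ↦ (1/2)(x₁ − x₂), x₂ ↦ (1/2)(x₁ + x₂), y₁ ↦ (1/2)(y₁ − y₂), y₂ ↦ y₁ + y₂. -/

import Mathlib

/-!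
`G = FreeAlgebra k (Fin 4)` is the free `k`-algebra on four generators
`x₁, x₂, y₁, y₂`.
-/

noncomputable section

variable (k : Type*) [Field k]

/-- The generators `x₁, x₂, y₁, y₂` of `G = FreeAlgebra k (Fin 4)`. -/
def x1 : FreeAlgebra k (Fin 4) := FreeAlgebra.ι k 0
def x2 : FreeAlgebra k (Fin 4) := FreeAlgebra.ι k 1
def y1 : FreeAlgebra k (Fin 4) := FreeAlgebra.ι k 2
def y2 : FreeAlgebra k (Fin 4) := FreeAlgebra.ι k 3

/-! Since `2 ≠ 0` the substitution `φ` is invertible. It sends `x₁y₁` and `x₂y₂` to `¼(a - b)`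
and `½(a + b)`, where `a = x₁y₁ + x₂y₂` and `b = x₂y₁ + x₁y₂`, while `φ⁻¹` sends `a` and `b` to
`2x₁y₁ + x₂y₂` and `-2x₁y₁ + x₂y₂`. So `φ` maps `⟨x₁y₁, x₂y₂⟩` onto `⟨a, b⟩` and descends to the
quotients. -/

namespace TwoSidedIdeal

theorem span_eq_comap_span {R S : Type*} [NonUnitalNonAssocRing R] [NonUnitalNonAssocRing S]
    (e : R ≃+* S) {s : Set R} {t : Set S}
    (hs : ∀ x ∈ s, e x ∈ span t) (ht : ∀ y ∈ t, e.symm y ∈ span s) :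
    span s = comap e (span t) := by
  refine le_antisymm (span_le.2 fun x hx ↦ (mem_comap e).2 (hs x hx)) fun x hx ↦ ?_
  have hle : span t ≤ comap e.symm (span s) := span_le.2 fun y hy ↦ (mem_comap _).2 (ht y hy)
  simpa [mem_comap] using hle ((mem_comap e).1 hx)

theorem smul_add_smul_mem_span_pair {R A : Type*} [CommSemiring R] [Ring A] [Algebra R A]
    (a b : R) (u v : A) : a • u + b • v ∈ span {u, v} := by
  have hu : u ∈ span {u, v} := subset_span (Set.mem_insert u {v})
  have hv : v ∈ span {u, v} := subset_span (Set.mem_insert_of_mem u rfl)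
  rw [Algebra.smul_def, Algebra.smul_def]
  exact add_mem _ (mul_mem_left _ _ _ hu) (mul_mem_left _ _ _ hv)

end TwoSidedIdeal

namespace FreeAlgebra

variable {R X : Type*} [CommSemiring R]

def liftAlgEquiv (f g : X → FreeAlgebra R X)
    (hfg : ∀ i, lift R f (g i) = ι R i) (hgf : ∀ i, lift R g (f i) = ι R i) :
    FreeAlgebra R X ≃ₐ[R] FreeAlgebra R X :=
  AlgEquiv.ofAlgHom (lift R f) (lift R g) (hom_ext <| funext fun i ↦ by simpa using hfg i)
    (hom_ext <| funext fun i ↦ by simpa using hgf i)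

variable (f g : X → FreeAlgebra R X) (hfg : ∀ i, lift R f (g i) = ι R i)
  (hgf : ∀ i, lift R g (f i) = ι R i)

theorem liftAlgEquiv_ι (i : X) : liftAlgEquiv f g hfg hgf (ι R i) = f i :=
  lift_ι_apply f i

theorem liftAlgEquiv_symm_ι (i : X) : (liftAlgEquiv f g hfg hgf).symm (ι R i) = g i :=
  lift_ι_apply g i

end FreeAlgebra

variable {k}

def subst : Fin 4 → FreeAlgebra k (Fin 4) :=
  ![(2 : k)⁻¹ • (x1 k - x2 k), (2 : k)⁻¹ • (x1 k + x2 k), (2 : k)⁻¹ • (y1 k - y2 k), y1 k + y2 k]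

def substInv : Fin 4 → FreeAlgebra k (Fin 4) :=
  ![x1 k + x2 k, x2 k - x1 k, y1 k + (2 : k)⁻¹ • y2 k, (2 : k)⁻¹ • y2 k - y1 k]

theorem lift_subst_substInv (hchar : (2 : k) ≠ 0) (i : Fin 4) :
    FreeAlgebra.lift k subst (substInv i) = FreeAlgebra.ι k i := by
  fin_cases i <;>
    simp only [subst, substInv, x1, x2, y1, y2, Fin.isValue, Fin.zero_eta, Fin.mk_one,
      Fin.reduceFinMk, Matrix.cons_val_zero, Matrix.cons_val_one, Matrix.cons_val, map_add,
      map_sub, map_smul, FreeAlgebra.lift_ι_apply] <;>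
    match_scalars <;> grind

theorem lift_substInv_subst (hchar : (2 : k) ≠ 0) (i : Fin 4) :
    FreeAlgebra.lift k substInv (subst i) = FreeAlgebra.ι k i := by
  fin_cases i <;>
    simp only [subst, substInv, x1, x2, y1, y2, Fin.isValue, Fin.zero_eta, Fin.mk_one,
      Fin.reduceFinMk, Matrix.cons_val_zero, Matrix.cons_val_one, Matrix.cons_val, map_add,
      map_sub, map_smul, FreeAlgebra.lift_ι_apply] <;>
    match_scalars <;> grind

def substEquiv (hchar : (2 : k) ≠ 0) : FreeAlgebra k (Fin 4) ≃ₐ[k] FreeAlgebra k (Fin 4) :=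
  FreeAlgebra.liftAlgEquiv subst substInv (lift_subst_substInv hchar) (lift_substInv_subst hchar)

section

variable (hchar : (2 : k) ≠ 0)

theorem substEquiv_x1 : substEquiv hchar (x1 k) = (2 : k)⁻¹ • (x1 k - x2 k) :=
  FreeAlgebra.liftAlgEquiv_ι ..

theorem substEquiv_x2 : substEquiv hchar (x2 k) = (2 : k)⁻¹ • (x1 k + x2 k) :=
  FreeAlgebra.liftAlgEquiv_ι ..

theorem substEquiv_y1 : substEquiv hchar (y1 k) = (2 : k)⁻¹ • (y1 k - y2 k) :=
  FreeAlgebra.liftAlgEquiv_ι ..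

theorem substEquiv_y2 : substEquiv hchar (y2 k) = y1 k + y2 k :=
  FreeAlgebra.liftAlgEquiv_ι ..

theorem substEquiv_symm_x1 : (substEquiv hchar).symm (x1 k) = x1 k + x2 k :=
  FreeAlgebra.liftAlgEquiv_symm_ι ..

theorem substEquiv_symm_x2 : (substEquiv hchar).symm (x2 k) = x2 k - x1 k :=
  FreeAlgebra.liftAlgEquiv_symm_ι ..

theorem substEquiv_symm_y1 : (substEquiv hchar).symm (y1 k) = y1 k + (2 : k)⁻¹ • y2 k :=
  FreeAlgebra.liftAlgEquiv_symm_ι ..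

theorem substEquiv_symm_y2 : (substEquiv hchar).symm (y2 k) = (2 : k)⁻¹ • y2 k - y1 k :=
  FreeAlgebra.liftAlgEquiv_symm_ι ..

theorem substEquiv_x1_mul_y1 :
    substEquiv hchar (x1 k * y1 k) =
      (2 : k)⁻¹ ^ 2 • (x1 k * y1 k + x2 k * y2 k) +
        (-(2 : k)⁻¹ ^ 2) • (x2 k * y1 k + x1 k * y2 k) := by
  rw [map_mul, substEquiv_x1, substEquiv_y1]
  simp only [smul_mul_smul_comm, mul_sub, sub_mul]
  match_scalars <;> ring

theorem substEquiv_x2_mul_y2 :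
    substEquiv hchar (x2 k * y2 k) =
      (2 : k)⁻¹ • (x1 k * y1 k + x2 k * y2 k) + (2 : k)⁻¹ • (x2 k * y1 k + x1 k * y2 k) := by
  rw [map_mul, substEquiv_x2, substEquiv_y2]
  simp only [smul_mul_assoc, mul_add, add_mul]
  match_scalars <;> ring

theorem substEquiv_symm_x1_mul_y1_add_x2_mul_y2 :
    (substEquiv hchar).symm (x1 k * y1 k + x2 k * y2 k) =
      (2 : k) • (x1 k * y1 k) + (1 : k) • (x2 k * y2 k) := by
  rw [map_add, map_mul, map_mul, substEquiv_symm_x1, substEquiv_symm_x2, substEquiv_symm_y1,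
    substEquiv_symm_y2]
  simp only [mul_add, add_mul, mul_sub, sub_mul, mul_smul_comm]
  match_scalars <;> grind

theorem substEquiv_symm_x2_mul_y1_add_x1_mul_y2 :
    (substEquiv hchar).symm (x2 k * y1 k + x1 k * y2 k) =
      (-2 : k) • (x1 k * y1 k) + (1 : k) • (x2 k * y2 k) := by
  rw [map_add, map_mul, map_mul, substEquiv_symm_x1, substEquiv_symm_x2, substEquiv_symm_y1,
    substEquiv_symm_y2]
  simp only [mul_add, add_mul, mul_sub, sub_mul, mul_smul_comm]
  match_scalars <;> grind

theorem span_eq_comap_substEquiv :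
    TwoSidedIdeal.span {x1 k * y1 k, x2 k * y2 k} =
      TwoSidedIdeal.comap (substEquiv hchar).toRingEquiv
        (TwoSidedIdeal.span {x1 k * y1 k + x2 k * y2 k, x2 k * y1 k + x1 k * y2 k}) := by
  apply TwoSidedIdeal.span_eq_comap_span <;>
    simp only [Set.forall_mem_insert, Set.mem_singleton_iff, forall_eq, AlgEquiv.coe_ringEquiv,
      AlgEquiv.toRingEquiv_symm]
  · rw [substEquiv_x1_mul_y1, substEquiv_x2_mul_y2]
    exact ⟨TwoSidedIdeal.smul_add_smul_mem_span_pair .., TwoSidedIdeal.smul_add_smul_mem_span_pair ..⟩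
  · rw [substEquiv_symm_x1_mul_y1_add_x2_mul_y2, substEquiv_symm_x2_mul_y1_add_x1_mul_y2]
    exact ⟨TwoSidedIdeal.smul_add_smul_mem_span_pair .., TwoSidedIdeal.smul_add_smul_mem_span_pair ..⟩

end

/-- If `char k ≠ 2`, then `G/⟨x₁y₁, x₂y₂⟩ ≅ G/⟨x₁y₁ + x₂y₂, x₂y₁ + x₁y₂⟩` as
`k`-algebras, and an isomorphism is induced by the automorphism of `G` sending
`x₁ ↦ ½(x₁ - x₂)`, `x₂ ↦ ½(x₁ + x₂)`, `y₁ ↦ ½(y₁ - y₂)`, `y₂ ↦ y₁ + y₂`. -/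
theorem free_quotient_iso (hchar : (2 : k) ≠ 0) :
    ∃ φ : FreeAlgebra k (Fin 4) ≃ₐ[k] FreeAlgebra k (Fin 4),
      φ (x1 k) = (2 : k)⁻¹ • (x1 k - x2 k) ∧
      φ (x2 k) = (2 : k)⁻¹ • (x1 k + x2 k) ∧
      φ (y1 k) = (2 : k)⁻¹ • (y1 k - y2 k) ∧
      φ (y2 k) = y1 k + y2 k ∧
      ∃ ψ : (TwoSidedIdeal.span {x1 k * y1 k, x2 k * y2 k} :
              TwoSidedIdeal (FreeAlgebra k (Fin 4))).ringCon.Quotient ≃ₐ[k]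
            (TwoSidedIdeal.span
                {x1 k * y1 k + x2 k * y2 k, x2 k * y1 k + x1 k * y2 k} :
              TwoSidedIdeal (FreeAlgebra k (Fin 4))).ringCon.Quotient,
        ∀ g : FreeAlgebra k (Fin 4),
          ψ ((TwoSidedIdeal.span {x1 k * y1 k, x2 k * y2 k} :
                TwoSidedIdeal (FreeAlgebra k (Fin 4))).ringCon.mk' g) =
            (TwoSidedIdeal.span
                {x1 k * y1 k + x2 k * y2 k, x2 k * y1 k + x1 k * y2 k} :
              TwoSidedIdeal (FreeAlgebra k (Fin 4))).ringCon.mk' (φ g) :=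
  ⟨substEquiv hchar, substEquiv_x1 hchar, substEquiv_x2 hchar, substEquiv_y1 hchar,
    substEquiv_y2 hchar,
    RingCon.congrₐ k (substEquiv hchar)
      (congrArg TwoSidedIdeal.ringCon (span_eq_comap_substEquiv hchar)),
    fun _ ↦ rfl⟩
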